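/- arXiv:1403.2410 — 4 statements merged into one kernel-verified Lean document; each statement's English description precedes it below -/
import Mathlib

section
/- Let Λ_{D₄} be the D₄ root lattice, i.e. ℤ⁴ with Gram matrix [[2,−1,0,0],[−1,2,−1,−1],[0,−1,2,0],[0,−1,0,2]]. Then the group SO₀(Λ_{D₄}) of determinant-1 automorphisms of Λ_{D₄} that induce the identity map on the discriminant group Λ_{D₄}*/Λ_{D₄} has order 96. -/
/-!
Over `ℚ` the dual lattice is `ℤ⁴ Q⁻¹`, so an isometry `g` acts trivially on `Λ*/Λ` exactly when
`Q⁻¹ (g - 1)` is integral; since `adj Q * Q = 4`, this is the congruence `adj Q (g - 1) ≡ 0 mod 4`.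
An isometry sends the simple roots to roots, and `2 ⟨v, v⟩` is a sum of four squares, so the 24
roots of `D₄` lie in `[-2, 2]⁴`. Hence `SO₀(Λ_{D₄})` is a subset of the 1152 frames of roots with
Gram matrix `Q` (one for each element of `W(F₄) = O(Λ_{D₄})`), which can be listed; 192 of them
satisfy the congruence and 96 of those have determinant one.
-/

open Matrix

open Matrix

def IsIntVec {n : ℕ} (x : Fin n → ℚ) : Prop := ∀ i, ∃ c : ℤ, x i = (c : ℚ)

lemma IsIntVec.add {n : ℕ} {u v : Fin n → ℚ} (hu : IsIntVec u) (hv : IsIntVec v) :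
    IsIntVec (u + v) := by
  intro i
  obtain ⟨c, hc⟩ := hu i
  obtain ⟨d, hd⟩ := hv i
  exact ⟨c + d, by simp [hc, hd]⟩

lemma IsIntVec.neg {n : ℕ} {u : Fin n → ℚ} (hu : IsIntVec u) : IsIntVec (-u) := by
  intro i
  obtain ⟨c, hc⟩ := hu i
  exact ⟨-c, by simp [hc]⟩

lemma mapq_mul {n : ℕ} (M N : Matrix (Fin n) (Fin n) ℤ) :
    (M * N).map ((↑) : ℤ → ℚ) = M.map ((↑) : ℤ → ℚ) * N.map ((↑) : ℤ → ℚ) := by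
  ext i j
  simp [Matrix.mul_apply]

lemma mapq_one {n : ℕ} : ((1 : Matrix (Fin n) (Fin n) ℤ)).map ((↑) : ℤ → ℚ) = 1 :=
  Matrix.map_one _ Int.cast_zero Int.cast_one

lemma intvec_vecMul {n : ℕ} {x : Fin n → ℚ} (hx : IsIntVec x)
    (Z : Matrix (Fin n) (Fin n) ℤ) :
    IsIntVec (Matrix.vecMul x (Z.map ((↑) : ℤ → ℚ))) := by
  intro i
  choose c hc using hx
  refine ⟨∑ j, c j * Z j i, ?_⟩
  simp only [Matrix.vecMul, dotProduct, Matrix.map_apply]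
  push_cast
  exact Finset.sum_congr rfl fun j _ => by rw [hc j]

lemma dual_pres {n : ℕ} (Q : Matrix (Fin n) (Fin n) ℤ) (a : (Matrix (Fin n) (Fin n) ℤ)ˣ)
    (ha : (a : Matrix (Fin n) (Fin n) ℤ) * Q * (a : Matrix (Fin n) (Fin n) ℤ)ᵀ = Q)
    {x : Fin n → ℚ} (hx : IsIntVec (Matrix.vecMul x (Q.map ((↑) : ℤ → ℚ)))) :
    IsIntVec (Matrix.vecMul (Matrix.vecMul x ((a : Matrix (Fin n) (Fin n) ℤ).map ((↑) : ℤ → ℚ)))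
      (Q.map ((↑) : ℤ → ℚ))) := by
  have key : (a : Matrix (Fin n) (Fin n) ℤ) * Q = Q * ((a⁻¹ : (Matrix (Fin n) (Fin n) ℤ)ˣ) : Matrix (Fin n) (Fin n) ℤ)ᵀ := by
    have h1 : (a : Matrix (Fin n) (Fin n) ℤ)ᵀ * ((a⁻¹ : (Matrix (Fin n) (Fin n) ℤ)ˣ) : Matrix (Fin n) (Fin n) ℤ)ᵀ = 1 := by
      rw [← Matrix.transpose_mul, Units.inv_mul, Matrix.transpose_one]
    calc (a : Matrix (Fin n) (Fin n) ℤ) * Q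
        = ((a : Matrix (Fin n) (Fin n) ℤ) * Q * (a : Matrix (Fin n) (Fin n) ℤ)ᵀ) *
            ((a⁻¹ : (Matrix (Fin n) (Fin n) ℤ)ˣ) : Matrix (Fin n) (Fin n) ℤ)ᵀ := by
          rw [Matrix.mul_assoc, h1, Matrix.mul_one]
      _ = Q * ((a⁻¹ : (Matrix (Fin n) (Fin n) ℤ)ˣ) : Matrix (Fin n) (Fin n) ℤ)ᵀ := by rw [ha]
  rw [Matrix.vecMul_vecMul, ← mapq_mul, key, mapq_mul, ← Matrix.vecMul_vecMul]
  exact intvec_vecMul hx _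

def SOzero {n : ℕ} (Q : Matrix (Fin n) (Fin n) ℤ) : Subgroup (Matrix (Fin n) (Fin n) ℤ)ˣ where
  carrier := {U | (U : Matrix (Fin n) (Fin n) ℤ) * Q * (U : Matrix (Fin n) (Fin n) ℤ)ᵀ = Q ∧
      (U : Matrix (Fin n) (Fin n) ℤ).det = 1 ∧
      ∀ x : Fin n → ℚ, IsIntVec (Matrix.vecMul x (Q.map ((↑) : ℤ → ℚ))) →
        IsIntVec (Matrix.vecMul x ((U : Matrix (Fin n) (Fin n) ℤ).map ((↑) : ℤ → ℚ)) - x)}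
  one_mem' := by
    refine ⟨by simp, by simp, fun x hx i => ⟨0, ?_⟩⟩
    simp [mapq_one]
  mul_mem' := by
    rintro a b ⟨ha1, ha2, ha3⟩ ⟨hb1, hb2, hb3⟩
    have hab1 : ((a * b : (Matrix (Fin n) (Fin n) ℤ)ˣ) : Matrix (Fin n) (Fin n) ℤ) * Q *
        ((a * b : (Matrix (Fin n) (Fin n) ℤ)ˣ) : Matrix (Fin n) (Fin n) ℤ)ᵀ = Q := by
      rw [Units.val_mul, Matrix.transpose_mul]
      calc (a : Matrix (Fin n) (Fin n) ℤ) * b * Q * ((b : Matrix (Fin n) (Fin n) ℤ)ᵀ * (a : Matrix (Fin n) (Fin n) ℤ)ᵀ)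
          = (a : Matrix (Fin n) (Fin n) ℤ) * ((b : Matrix (Fin n) (Fin n) ℤ) * Q * (b : Matrix (Fin n) (Fin n) ℤ)ᵀ) * (a : Matrix (Fin n) (Fin n) ℤ)ᵀ := by
            noncomm_ring
        _ = Q := by rw [hb1, ha1]
    refine ⟨hab1, by rw [Units.val_mul, Matrix.det_mul, ha2, hb2, one_mul], fun x hx => ?_⟩
    have hy := dual_pres Q a ha1 hx
    set y := Matrix.vecMul x ((a : Matrix (Fin n) (Fin n) ℤ).map ((↑) : ℤ → ℚ)) with hydef
    have h1 : IsIntVec (Matrix.vecMul y ((b : Matrix (Fin n) (Fin n) ℤ).map ((↑) : ℤ → ℚ)) - y) :=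
      hb3 y hy
    have h2 : IsIntVec (y - x) := ha3 x hx
    have hrw : Matrix.vecMul x (((a * b : (Matrix (Fin n) (Fin n) ℤ)ˣ) : Matrix (Fin n) (Fin n) ℤ).map ((↑) : ℤ → ℚ)) - x =
        (Matrix.vecMul y ((b : Matrix (Fin n) (Fin n) ℤ).map ((↑) : ℤ → ℚ)) - y) + (y - x) := by
      rw [Units.val_mul, mapq_mul, ← Matrix.vecMul_vecMul, ← hydef]
      abel
    rw [hrw]
    exact h1.add h2
  inv_mem' := by
    rintro a ⟨ha1, ha2, ha3⟩
    have hi1 : ((a⁻¹ : (Matrix (Fin n) (Fin n) ℤ)ˣ) : Matrix (Fin n) (Fin n) ℤ) * Q *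
        ((a⁻¹ : (Matrix (Fin n) (Fin n) ℤ)ˣ) : Matrix (Fin n) (Fin n) ℤ)ᵀ = Q := by
      have h1 : (a : Matrix (Fin n) (Fin n) ℤ)ᵀ * ((a⁻¹ : (Matrix (Fin n) (Fin n) ℤ)ˣ) : Matrix (Fin n) (Fin n) ℤ)ᵀ = 1 := by
        rw [← Matrix.transpose_mul, Units.inv_mul, Matrix.transpose_one]
      have h2 : ((a⁻¹ : (Matrix (Fin n) (Fin n) ℤ)ˣ) : Matrix (Fin n) (Fin n) ℤ) * (a : Matrix (Fin n) (Fin n) ℤ) = 1 := Units.inv_mul a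
      calc ((a⁻¹ : (Matrix (Fin n) (Fin n) ℤ)ˣ) : Matrix (Fin n) (Fin n) ℤ) * Q * ((a⁻¹ : (Matrix (Fin n) (Fin n) ℤ)ˣ) : Matrix (Fin n) (Fin n) ℤ)ᵀ
          = ((a⁻¹ : (Matrix (Fin n) (Fin n) ℤ)ˣ) : Matrix (Fin n) (Fin n) ℤ) * ((a : Matrix (Fin n) (Fin n) ℤ) * Q * (a : Matrix (Fin n) (Fin n) ℤ)ᵀ) * ((a⁻¹ : (Matrix (Fin n) (Fin n) ℤ)ˣ) : Matrix (Fin n) (Fin n) ℤ)ᵀ := by rw [ha1]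
        _ = (((a⁻¹ : (Matrix (Fin n) (Fin n) ℤ)ˣ) : Matrix (Fin n) (Fin n) ℤ) * (a : Matrix (Fin n) (Fin n) ℤ)) * Q * ((a : Matrix (Fin n) (Fin n) ℤ)ᵀ * ((a⁻¹ : (Matrix (Fin n) (Fin n) ℤ)ˣ) : Matrix (Fin n) (Fin n) ℤ)ᵀ) := by noncomm_ring
        _ = Q := by rw [h1, h2, Matrix.one_mul, Matrix.mul_one]
    have hi2 : ((a⁻¹ : (Matrix (Fin n) (Fin n) ℤ)ˣ) : Matrix (Fin n) (Fin n) ℤ).det = 1 := by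
      have := Matrix.det_mul ((a⁻¹ : (Matrix (Fin n) (Fin n) ℤ)ˣ) : Matrix (Fin n) (Fin n) ℤ) (a : Matrix (Fin n) (Fin n) ℤ)
      rw [Units.inv_mul, Matrix.det_one, ha2, mul_one] at this
      exact this.symm
    refine ⟨hi1, hi2, fun x hx => ?_⟩
    have hy := dual_pres Q a⁻¹ hi1 hx
    set y := Matrix.vecMul x (((a⁻¹ : (Matrix (Fin n) (Fin n) ℤ)ˣ) : Matrix (Fin n) (Fin n) ℤ).map ((↑) : ℤ → ℚ)) with hydef
    have h1 : IsIntVec (Matrix.vecMul y ((a : Matrix (Fin n) (Fin n) ℤ).map ((↑) : ℤ → ℚ)) - y) :=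
      ha3 y hy
    have hyx : Matrix.vecMul y ((a : Matrix (Fin n) (Fin n) ℤ).map ((↑) : ℤ → ℚ)) = x := by
      rw [hydef, Matrix.vecMul_vecMul, ← mapq_mul, Units.inv_mul, mapq_one, Matrix.vecMul_one]
    rw [hyx] at h1
    have : y - x = -(x - y) := by abel
    rw [this]
    exact h1.neg


/-- The Gram matrix of the D₄ root lattice. -/
def QD4 : Matrix (Fin 4) (Fin 4) ℤ := !![2,-1,0,0; -1,2,-1,-1; 0,-1,2,0; 0,-1,0,2]

section General

variable {n : ℕ}

def FixesDiscriminant (Q M : Matrix (Fin n) (Fin n) ℤ) : Prop :=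
  ∀ x : Fin n → ℚ, IsIntVec (x ᵥ* Q.map ((↑) : ℤ → ℚ)) → IsIntVec (x ᵥ* M.map ((↑) : ℤ → ℚ) - x)

theorem isIntVec_iff {x : Fin n → ℚ} : IsIntVec x ↔ ∃ w : Fin n → ℤ, (↑) ∘ w = x := by
  refine ⟨fun h => ?_, ?_⟩
  · choose w hw using h
    exact ⟨w, funext fun i => (hw i).symm⟩
  · rintro ⟨w, rfl⟩ i
    exact ⟨w i, rfl⟩

theorem intCast_comp_vecMul (w : Fin n → ℤ) (Z : Matrix (Fin n) (Fin n) ℤ) :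
    ((↑) ∘ (w ᵥ* Z) : Fin n → ℚ) = ((↑) ∘ w) ᵥ* Z.map (↑) :=
  funext (RingHom.map_vecMul (Int.castRingHom ℚ) Z w)

theorem map_intCast_smul_one (d : ℤ) :
    ((d • 1 : Matrix (Fin n) (Fin n) ℤ)).map ((↑) : ℤ → ℚ) = (d : ℚ) • 1 := by
  ext i j
  rw [Matrix.map_apply, Matrix.smul_apply, Matrix.smul_apply]
  by_cases h : i = j <;> simp [Matrix.one_apply, h]

/-- Over `ℚ`, `A = d • Q⁻¹`, so the dual lattice is `ℤⁿ A / d`. -/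
theorem fixesDiscriminant_iff_dvd {Q A M : Matrix (Fin n) (Fin n) ℤ} {d : ℤ} (hd : d ≠ 0)
    (hA : A * Q = d • 1) : FixesDiscriminant Q M ↔ ∀ i j, d ∣ (A * (M - 1)) i j := by
  have hd' : (d : ℚ) ≠ 0 := Int.cast_ne_zero.mpr hd
  have hQA : Q.map (↑) * A.map ((↑) : ℤ → ℚ) = (d : ℚ) • 1 := by
    have h : ((d : ℚ)⁻¹ • A.map ((↑) : ℤ → ℚ)) * Q.map (↑) = 1 := by
      rw [Matrix.smul_mul, ← mapq_mul, hA, map_intCast_smul_one, smul_smul, inv_mul_cancel₀ hd',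
        one_smul]
    rw [← mul_eq_one_comm.mp h, Matrix.mul_smul, smul_smul, mul_inv_cancel₀ hd', one_smul]
  have key : ∀ x : Fin n → ℚ, (d : ℚ) • (x ᵥ* M.map (↑) - x) =
      (x ᵥ* Q.map (↑)) ᵥ* (A * (M - 1)).map (↑) := by
    intro x
    rw [mapq_mul, vecMul_vecMul, ← Matrix.mul_assoc, hQA, Matrix.smul_mul, Matrix.one_mul,
      vecMul_smul, Matrix.map_sub _ Int.cast_sub, mapq_one, vecMul_sub, vecMul_one]
  constructor
  · intro h i j
    obtain ⟨x, hx⟩ : ∃ x : Fin n → ℚ, x ᵥ* Q.map (↑) = (↑) ∘ (Pi.single i 1 : Fin n → ℤ) := by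
      refine ⟨(d : ℚ)⁻¹ • ((Pi.single i 1 : Fin n → ℚ) ᵥ* A.map (↑)), ?_⟩
      rw [smul_vecMul, vecMul_vecMul, ← mapq_mul, hA, map_intCast_smul_one, vecMul_smul,
        vecMul_one, smul_smul, inv_mul_cancel₀ hd', one_smul]
      ext k
      by_cases hk : k = i <;> simp [hk]
    obtain ⟨k, hk⟩ := h x (isIntVec_iff.mpr ⟨_, hx.symm⟩) j
    have hkey := congrFun (key x) j
    rw [hx, ← intCast_comp_vecMul, Pi.smul_apply, hk, single_one_vecMul] at hkey
    simp only [smul_eq_mul, Function.comp_apply, row_apply] at hkey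
    exact ⟨k, by exact_mod_cast hkey.symm⟩
  · intro h x hx
    choose Z hZ using h
    have hN : A * (M - 1) = d • Matrix.of Z := by
      ext i j
      simp [hZ]
    have hmap : (d • Matrix.of Z).map ((↑) : ℤ → ℚ) = (d : ℚ) • (Matrix.of Z).map (↑) := by
      ext i j
      simp
    obtain ⟨w, hw⟩ := isIntVec_iff.mp hx
    refine isIntVec_iff.mpr ⟨w ᵥ* Matrix.of Z, smul_right_injective _ hd' ?_⟩
    simp only [key, ← hw, hN, hmap, vecMul_smul, intCast_comp_vecMul]

noncomputable def SOzero.equivSubtype (Q : Matrix (Fin n) (Fin n) ℤ) :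
    SOzero Q ≃
      {M : Matrix (Fin n) (Fin n) ℤ // M * Q * Mᵀ = Q ∧ M.det = 1 ∧ FixesDiscriminant Q M} where
  toFun U := ⟨U.1, U.2⟩
  invFun M := ⟨((isUnit_iff_isUnit_det M.1).mpr (by rw [M.2.2.1]; exact isUnit_one)).unit, M.2⟩
  left_inv _ := Subtype.ext (Units.ext rfl)
  right_inv _ := rfl

end General

theorem Matrix.mul_mul_transpose_apply {m α : Type*} [Fintype m] [CommSemiring α]
    (M Q : Matrix m m α) (i j : m) : (M * Q * Mᵀ) i j = M i ⬝ᵥ Q *ᵥ M j := by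
  rw [Matrix.mul_assoc, mul_apply']
  rfl

theorem Matrix.IsSymm.dotProduct_mulVec_comm {m α : Type*} [Fintype m] [CommSemiring α]
    {Q : Matrix m m α} (hQ : Q.IsSymm) (v w : m → α) : v ⬝ᵥ Q *ᵥ w = w ⬝ᵥ Q *ᵥ v := by
  rw [dotProduct_mulVec, dotProduct_comm, ← mulVec_transpose, hQ.eq]

theorem Multiset.nodup_bind_of_fibers {α β : Type*} {s : Multiset α} {t : α → Multiset β}
    (g : β → α) (hs : s.Nodup) (ht : ∀ a ∈ s, (t a).Nodup) (hg : ∀ a ∈ s, ∀ b ∈ t a, g b = a) :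
    (s.bind t).Nodup :=
  Multiset.nodup_bind.mpr ⟨ht, hs.pairwise fun a ha a' ha' hne => Multiset.disjoint_left.mpr
    fun hb hb' => hne ((hg a ha _ hb).symm.trans (hg a' ha' _ hb'))⟩

/-- Listed row by row: each row is only chosen among the vectors with the right products with the
earlier rows, which keeps the search small. -/
def gramFrames (Q : Matrix (Fin 4) (Fin 4) ℤ) (R : Multiset (Fin 4 → ℤ)) :
    Multiset (Matrix (Fin 4) (Fin 4) ℤ) :=
  (R.filter fun r₀ => r₀ ⬝ᵥ Q *ᵥ r₀ = Q 0 0).bind fun r₀ =>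
  (R.filter fun r₁ => r₀ ⬝ᵥ Q *ᵥ r₁ = Q 0 1 ∧ r₁ ⬝ᵥ Q *ᵥ r₁ = Q 1 1).bind fun r₁ =>
  (R.filter fun r₂ => r₀ ⬝ᵥ Q *ᵥ r₂ = Q 0 2 ∧ r₁ ⬝ᵥ Q *ᵥ r₂ = Q 1 2 ∧
    r₂ ⬝ᵥ Q *ᵥ r₂ = Q 2 2).bind fun r₂ =>
  (R.filter fun r₃ => r₀ ⬝ᵥ Q *ᵥ r₃ = Q 0 3 ∧ r₁ ⬝ᵥ Q *ᵥ r₃ = Q 1 3 ∧ r₂ ⬝ᵥ Q *ᵥ r₃ = Q 2 3 ∧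
    r₃ ⬝ᵥ Q *ᵥ r₃ = Q 3 3).map fun r₃ => Matrix.of ![r₀, r₁, r₂, r₃]

theorem mem_gramFrames {Q : Matrix (Fin 4) (Fin 4) ℤ} (hQ : Q.IsSymm) {R : Multiset (Fin 4 → ℤ)}
    {M : Matrix (Fin 4) (Fin 4) ℤ} : M ∈ gramFrames Q R ↔ (∀ i, M i ∈ R) ∧ M * Q * Mᵀ = Q := by
  simp only [gramFrames, Multiset.mem_bind, Multiset.mem_filter, Multiset.mem_map]
  constructor
  · rintro ⟨r₀, ⟨h₀, g₀₀⟩, r₁, ⟨h₁, g₀₁, g₁₁⟩, r₂, ⟨h₂, g₀₂, g₁₂, g₂₂⟩, r₃,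
      ⟨h₃, g₀₃, g₁₃, g₂₃, g₃₃⟩, rfl⟩
    refine ⟨fun i => by fin_cases i <;> assumption, ?_⟩
    ext i j
    rw [mul_mul_transpose_apply]
    fin_cases i <;> fin_cases j <;>
      first | assumption | (rw [hQ.dotProduct_mulVec_comm, hQ.apply]; assumption)
  · rintro ⟨hR, hG⟩
    have g := fun i j => (mul_mul_transpose_apply M Q i j).symm.trans (congrFun₂ hG i j)
    refine ⟨M 0, ⟨hR 0, g 0 0⟩, M 1, ⟨hR 1, g 0 1, g 1 1⟩, M 2, ⟨hR 2, g 0 2, g 1 2, g 2 2⟩,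
      M 3, ⟨hR 3, g 0 3, g 1 3, g 2 3, g 3 3⟩, ?_⟩
    ext i j
    fin_cases i <;> rfl

theorem nodup_gramFrames (Q : Matrix (Fin 4) (Fin 4) ℤ) {R : Multiset (Fin 4 → ℤ)}
    (hR : R.Nodup) : (gramFrames Q R).Nodup := by
  refine Multiset.nodup_bind_of_fibers (· 0) (hR.filter _) (fun r₀ _ => ?_) ?_
  · refine Multiset.nodup_bind_of_fibers (· 1) (hR.filter _) (fun r₁ _ => ?_) ?_
    · refine Multiset.nodup_bind_of_fibers (· 2) (hR.filter _) (fun r₂ _ => ?_) ?_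
      · exact (hR.filter _).map fun r r' h => congrFun h 3
      · rintro r₂ - M hM
        obtain ⟨r₃, -, rfl⟩ := Multiset.mem_map.mp hM
        rfl
    · rintro r₁ - M hM
      simp only [Multiset.mem_bind, Multiset.mem_map] at hM
      obtain ⟨r₂, -, r₃, -, rfl⟩ := hM
      rfl
  · rintro r₀ - M hM
    simp only [Multiset.mem_bind, Multiset.mem_map] at hM
    obtain ⟨r₁, -, r₂, -, r₃, -, rfl⟩ := hM
    rfl

theorem QD4_isSymm : QD4.IsSymm := by decide

theorem two_mul_dotProduct_QD4_mulVec_self (v : Fin 4 → ℤ) :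
    2 * (v ⬝ᵥ QD4 *ᵥ v) =
      (2 * v 0 - v 1) ^ 2 + v 1 ^ 2 + (2 * v 2 - v 1) ^ 2 + (2 * v 3 - v 1) ^ 2 := by
  simp only [dotProduct, mulVec, Fin.sum_univ_four, QD4, of_apply, cons_val', cons_val_fin_one,
    cons_val_zero, cons_val_one, cons_val]
  ring

-- `noncomputable` only because the compiler rejects the order instance behind `Finset.Icc` on `ℤ`;
-- the kernel still evaluates it in `card_d4SO`.
noncomputable def d4Roots : Finset (Fin 4 → ℤ) :=
  (Fintype.piFinset fun _ => Finset.Icc (-2) 2).filter fun v => v ⬝ᵥ QD4 *ᵥ v = 2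

theorem mem_d4Roots {v : Fin 4 → ℤ} : v ∈ d4Roots ↔ v ⬝ᵥ QD4 *ᵥ v = 2 := by
  simp only [d4Roots, Finset.mem_filter, Fintype.mem_piFinset, Finset.mem_Icc,
    and_iff_right_iff_imp]
  intro h
  have hsq := two_mul_dotProduct_QD4_mulVec_self v
  rw [h] at hsq
  have bound : ∀ a : ℤ, a ^ 2 ≤ 2 ^ 2 → -2 ≤ a ∧ a ≤ 2 :=
    fun a ha => abs_le_of_sq_le_sq' ha (by norm_num)
  have b₀ := bound (2 * v 0 - v 1)
    (by nlinarith [sq_nonneg (v 1), sq_nonneg (2 * v 2 - v 1), sq_nonneg (2 * v 3 - v 1)])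
  have b₁ := bound (v 1)
    (by nlinarith [sq_nonneg (2 * v 0 - v 1), sq_nonneg (2 * v 2 - v 1), sq_nonneg (2 * v 3 - v 1)])
  have b₂ := bound (2 * v 2 - v 1)
    (by nlinarith [sq_nonneg (2 * v 0 - v 1), sq_nonneg (v 1), sq_nonneg (2 * v 3 - v 1)])
  have b₃ := bound (2 * v 3 - v 1)
    (by nlinarith [sq_nonneg (2 * v 0 - v 1), sq_nonneg (v 1), sq_nonneg (2 * v 2 - v 1)])
  intro i
  fin_cases i <;> simp only [Fin.zero_eta, Fin.mk_one, Fin.reduceFinMk, Fin.isValue] <;> omega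

theorem row_mem_d4Roots {M : Matrix (Fin 4) (Fin 4) ℤ} (hM : M * QD4 * Mᵀ = QD4) (i : Fin 4) :
    M i ∈ d4Roots := by
  rw [mem_d4Roots, ← mul_mul_transpose_apply, hM]
  fin_cases i <;> rfl

def d4Adj : Matrix (Fin 4) (Fin 4) ℤ := !![4, 4, 2, 2; 4, 8, 4, 4; 2, 4, 4, 2; 2, 4, 2, 4]

theorem d4Adj_mul_QD4 : d4Adj * QD4 = (4 : ℤ) • 1 := by decide

noncomputable def d4Frames : Finset (Matrix (Fin 4) (Fin 4) ℤ) :=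
  ⟨gramFrames QD4 d4Roots.val, nodup_gramFrames QD4 d4Roots.nodup⟩

noncomputable def d4SO : Finset (Matrix (Fin 4) (Fin 4) ℤ) :=
  d4Frames.filter fun M => (∀ i j, 4 ∣ (d4Adj * (M - 1)) i j) ∧ M.det = 1

theorem mem_d4SO {M : Matrix (Fin 4) (Fin 4) ℤ} :
    M ∈ d4SO ↔ M * QD4 * Mᵀ = QD4 ∧ M.det = 1 ∧ FixesDiscriminant QD4 M := by
  rw [fixesDiscriminant_iff_dvd (by norm_num) d4Adj_mul_QD4, d4SO, Finset.mem_filter, d4Frames,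
    Finset.mem_mk, mem_gramFrames QD4_isSymm]
  exact ⟨fun ⟨⟨_, hG⟩, hdvd, hdet⟩ => ⟨hG, hdet, hdvd⟩,
    fun ⟨hG, hdet, hdvd⟩ => ⟨⟨row_mem_d4Roots hG, hG⟩, hdvd, hdet⟩⟩

theorem card_d4SO : d4SO.card = 96 := by decide +kernel

theorem statement8 : Nat.card ↥(SOzero QD4) = 96 := by
  rw [Nat.card_congr (SOzero.equivSubtype QD4), ← card_d4SO, ← Nat.card_eq_finsetCard]
  exact Nat.card_congr (Equiv.subtypeEquivRight fun M => mem_d4SO.symm)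
end

section
/- Let Λ_{A₄} be the A₄ root lattice, i.e. ℤ⁴ with Gram matrix [[2,−1,0,0],[−1,2,−1,0],[0,−1,2,−1],[0,0,−1,2]]. Then the group SO₀(Λ_{A₄}) of determinant-1 automorphisms of Λ_{A₄} that induce the identity map on the discriminant group Λ_{A₄}*/Λ_{A₄} is isomorphic to the alternating group Alt(5); in particular it has order 60. -/
/-!
STATEMENT 9: The group SO₀(Λ_{A₄}) of determinant-1 automorphisms of the A₄ root
lattice that induce the identity map on the discriminant group is isomorphic to the
alternating group Alt(5); in particular it has order 60.
-/

open Matrix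

open Matrix

/-- The Gram matrix of the A₄ root lattice. -/
def QA4 : Matrix (Fin 4) (Fin 4) ℤ := !![2,-1,0,0; -1,2,-1,0; 0,-1,2,-1; 0,0,-1,2]


/-!
Λ_{A₄} is the lattice of coordinate-sum-zero vectors in ℤ⁵, with basis the simple roots
e₀ - e₁, …, e₃ - e₄. Permuting coordinates gives an action of S₅ by isometries, with determinant
the sign of the permutation and trivial on the discriminant group. Conversely, an isometry sends
the simple roots to norm-2 vectors of the form e_a - e_b whose inner products form the A₄ chain,
which forces them to be ±(e_{τ 0} - e_{τ 1}), …, ±(e_{τ 3} - e_{τ 4}); so every isometry is ±τ.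
The sign is +, since -1 acts as -1 on Λ*/Λ ≅ ℤ/5, and det = 1 makes τ even. The resulting map
Alt(5) → SO₀(Λ_{A₄}) is injective because Alt(5) is simple.
-/

open Equiv

lemma exists_eq_single_sub_single {ι : Type*} [Fintype ι] [DecidableEq ι] {v : ι → ℤ}
    (hsum : ∑ i, v i = 0) (hsq : ∑ i, v i ^ 2 = 2) :
    ∃ a b, v = Pi.single a 1 - Pi.single b 1 := by
  have hne : v ≠ 0 := by rintro rfl; simp at hsq
  obtain ⟨a, ha⟩ : ∃ a, 0 < v a := by
    by_contra! h
    exact hne <| funext fun i =>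
      (Finset.sum_eq_zero_iff_of_nonpos fun i _ => h i).1 hsum i (Finset.mem_univ i)
  obtain ⟨b, hb⟩ : ∃ b, v b < 0 := by
    by_contra! h
    exact hne <| funext fun i =>
      (Finset.sum_eq_zero_iff_of_nonneg fun i _ => h i).1 hsum i (Finset.mem_univ i)
  have hab : a ≠ b := by rintro rfl; omega
  have hle : ∀ s : Finset ι, ∑ i ∈ s, v i ^ 2 ≤ 2 := fun s => hsq ▸
    Finset.sum_le_sum_of_subset_of_nonneg (Finset.subset_univ s) fun i _ _ => sq_nonneg (v i)
  have hpair := hle {a, b}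
  rw [Finset.sum_pair hab] at hpair
  have hva : v a = 1 := by nlinarith
  have hvb : v b = -1 := by nlinarith
  refine ⟨a, b, funext fun c => ?_⟩
  by_cases hca : c = a
  · simp [hca, hab, hva]
  by_cases hcb : c = b
  · simp [hcb, hab.symm, hvb]
  have htriple := hle {a, b, c}
  rw [Finset.sum_insert (by simp [hab, Ne.symm hca]), Finset.sum_pair (Ne.symm hcb), hva, hvb]
    at htriple
  simp only [Pi.sub_apply, ne_eq, hca, not_false_eq_true, Pi.single_eq_of_ne, hcb, sub_self]
  nlinarith

lemma permMatrix_mulVec_one {n R : Type*} [DecidableEq n] [Fintype n] [CommRing R]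
    (σ : Perm n) : σ.permMatrix R *ᵥ 1 = 1 := by
  rw [permMatrix_mulVec]; rfl

/-- `x` lies in the dual lattice iff `x Q` is integral, so `U - 1 ∈ Q·Mₙ(ℤ)` makes `U` act
trivially on the discriminant group. -/
lemma isIntVec_vecMul_sub_of_sub_one_eq_mul {n : ℕ} {Q U M : Matrix (Fin n) (Fin n) ℤ}
    (h : U - 1 = Q * M) {x : Fin n → ℚ} (hx : IsIntVec (x ᵥ* Q.map ((↑) : ℤ → ℚ))) :
    IsIntVec (x ᵥ* U.map ((↑) : ℤ → ℚ) - x) := by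
  have hx' : x ᵥ* U.map ((↑) : ℤ → ℚ) - x =
      (x ᵥ* Q.map ((↑) : ℤ → ℚ)) ᵥ* M.map ((↑) : ℤ → ℚ) := by
    rw [vecMul_vecMul, ← mapq_mul, ← h, Matrix.map_sub _ (fun a b => Int.cast_sub a b), mapq_one,
      vecMul_sub, vecMul_one]
  rw [hx']
  exact intvec_vecMul hx M

namespace A4

def root (a b : Fin 5) : Fin 5 → ℤ := Pi.single a 1 - Pi.single b 1

def simpleRoots : Matrix (Fin 4) (Fin 5) ℤ := Matrix.of fun k => root k.castSucc k.succ

/-- A right inverse of `simpleRoots`: `v ᵥ* partialSums` is the vector of partial sums of `v`. -/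
def partialSums : Matrix (Fin 5) (Fin 4) ℤ := Matrix.of fun l k => if l ≤ k.castSucc then 1 else 0

lemma QA4_eq_simpleRoots_mul_transpose : QA4 = simpleRoots * simpleRootsᵀ := by decide

lemma simpleRoots_mul_partialSums : simpleRoots * partialSums = 1 := by decide

lemma simpleRoots_mulVec_one : simpleRoots *ᵥ 1 = 0 := by decide

lemma mul_partialSums_mul_simpleRoots {m : Type*} (W : Matrix m (Fin 5) ℤ) (hW : W *ᵥ 1 = 0) :
    W * partialSums * simpleRoots = W := by
  ext i j
  have hi := congrFun hW i
  simp only [mulVec, dotProduct, Fin.sum_univ_five, Pi.one_apply, mul_one, Pi.zero_apply] at hi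
  fin_cases j <;>
    simp [mul_apply, Fin.sum_univ_five, Fin.sum_univ_four, partialSums, simpleRoots, root,
      Pi.single_apply] <;>
    omega

lemma simpleRoots_mul_permMatrix_mulVec_one (σ : Perm (Fin 5)) :
    (simpleRoots * σ.permMatrix ℤ) *ᵥ 1 = 0 := by
  rw [← mulVec_mulVec, permMatrix_mulVec_one, simpleRoots_mulVec_one]

lemma simpleRoots_mul_permMatrix_row (τ : Perm (Fin 5)) (k : Fin 4) :
    (simpleRoots * τ.permMatrix ℤ) k = root (τ k.castSucc) (τ k.succ) := by
  change simpleRoots k ᵥ* τ.permMatrix ℤ = _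
  funext j
  simp [vecMul_permMatrix, simpleRoots, root, Pi.single_apply, Equiv.symm_apply_eq]

def permRep : Perm (Fin 5) →* Matrix (Fin 4) (Fin 4) ℤ where
  toFun σ := simpleRoots * σ⁻¹.permMatrix ℤ * partialSums
  map_one' := by rw [inv_one, permMatrix_one, Matrix.mul_one, simpleRoots_mul_partialSums]
  map_mul' σ τ := by
    rw [← Matrix.mul_assoc, ← Matrix.mul_assoc,
      mul_partialSums_mul_simpleRoots _ (simpleRoots_mul_permMatrix_mulVec_one _),
      _root_.mul_inv_rev, permMatrix_mul]
    simp only [Matrix.mul_assoc]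

lemma permRep_apply (σ : Perm (Fin 5)) :
    permRep σ = simpleRoots * σ⁻¹.permMatrix ℤ * partialSums := rfl

lemma permRep_mul_simpleRoots (σ : Perm (Fin 5)) :
    permRep σ * simpleRoots = simpleRoots * σ⁻¹.permMatrix ℤ :=
  mul_partialSums_mul_simpleRoots _ (simpleRoots_mul_permMatrix_mulVec_one _)

lemma permRep_mul_QA4_mul_transpose (σ : Perm (Fin 5)) :
    permRep σ * QA4 * (permRep σ)ᵀ = QA4 := by
  rw [QA4_eq_simpleRoots_mul_transpose, ← Matrix.mul_assoc, permRep_mul_simpleRoots,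
    Matrix.mul_assoc, ← transpose_mul, permRep_mul_simpleRoots, transpose_mul,
    transpose_permMatrix, ← Matrix.mul_assoc, Matrix.mul_assoc simpleRoots, ← permMatrix_mul,
    inv_mul_cancel, permMatrix_one, Matrix.mul_one]

lemma det_permRep (σ : Perm (Fin 5)) : (permRep σ).det = Perm.sign σ := by
  set d : Perm (Fin 5) →* ℤˣ := (Units.map (detMonoidHom.comp permRep)).comp toUnits.toMonoidHom
  have hswap : d (swap 0 1) = -1 := Units.ext (by decide)
  have hd : d = Perm.sign := Perm.eq_sign_of_surjective_hom fun u => by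
    rcases Int.units_eq_one_or u with rfl | rfl
    exacts [⟨1, map_one d⟩, ⟨_, hswap⟩]
  exact congrArg Units.val (DFunLike.congr_fun hd σ)

lemma permRep_sub_one (σ : Perm (Fin 5)) :
    permRep σ - 1 = QA4 * (partialSumsᵀ * (σ⁻¹.permMatrix ℤ - 1) * partialSums) := by
  have h : (σ⁻¹.permMatrix ℤ - 1)ᵀ * partialSums * simpleRoots = (σ⁻¹.permMatrix ℤ - 1)ᵀ := by
    refine mul_partialSums_mul_simpleRoots _ ?_
    rw [transpose_sub, transpose_permMatrix, transpose_one, sub_mulVec, permMatrix_mulVec_one,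
      one_mulVec, sub_self]
  have h' := congrArg transpose h
  simp only [transpose_mul, transpose_transpose] at h'
  calc permRep σ - 1 = simpleRoots * (σ⁻¹.permMatrix ℤ - 1) * partialSums := by
        rw [permRep_apply, Matrix.mul_sub, Matrix.sub_mul, Matrix.mul_one,
          simpleRoots_mul_partialSums]
    _ = simpleRoots * (simpleRootsᵀ * (partialSumsᵀ * (σ⁻¹.permMatrix ℤ - 1))) * partialSums := by
        rw [h']
    _ = QA4 * (partialSumsᵀ * (σ⁻¹.permMatrix ℤ - 1) * partialSums) := by
        rw [QA4_eq_simpleRoots_mul_transpose]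
        simp only [Matrix.mul_assoc]

lemma root_chain : ∀ a₀ b₀ a₁ b₁ : Fin 5, root a₀ b₀ ⬝ᵥ root a₁ b₁ = -1 →
    ∀ a₂ b₂ : Fin 5, root a₁ b₁ ⬝ᵥ root a₂ b₂ = -1 → root a₀ b₀ ⬝ᵥ root a₂ b₂ = 0 →
    ∀ a₃ b₃ : Fin 5, root a₂ b₂ ⬝ᵥ root a₃ b₃ = -1 → root a₀ b₀ ⬝ᵥ root a₃ b₃ = 0 →
      root a₁ b₁ ⬝ᵥ root a₃ b₃ = 0 →
    (b₀ = a₁ ∧ b₁ = a₂ ∧ b₂ = a₃ ∧ Function.Injective ![a₀, a₁, a₂, a₃, b₃]) ∨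
    (a₀ = b₁ ∧ a₁ = b₂ ∧ a₂ = b₃ ∧ Function.Injective ![b₀, b₁, b₂, b₃, a₃]) := by
  decide

lemma exists_perm_of_gram {W : Matrix (Fin 4) (Fin 5) ℤ} (hW : W *ᵥ 1 = 0)
    (hgram : W * Wᵀ = QA4) :
    ∃ τ : Perm (Fin 5),
      W = simpleRoots * τ.permMatrix ℤ ∨ W = -(simpleRoots * τ.permMatrix ℤ) := by
  have hip : ∀ k l, W k ⬝ᵥ W l = QA4 k l := fun k l => congrFun (congrFun hgram k) l
  have hroot : ∀ k, ∃ a b, W k = root a b := fun k =>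
    exists_eq_single_sub_single (by simpa [mulVec, dotProduct] using congrFun hW k)
      (by simpa [dotProduct, sq] using (hip k k).trans (by fin_cases k <;> rfl))
  choose a b hab using hroot
  simp only [hab] at hip
  rcases root_chain _ _ _ _ (hip 0 1) _ _ (hip 1 2) (hip 0 2) _ _ (hip 2 3) (hip 0 3) (hip 1 3)
    with ⟨h₀, h₁, h₂, hinj⟩ | ⟨h₀, h₁, h₂, hinj⟩
  · refine ⟨Equiv.ofBijective _ hinj.bijective_of_finite, Or.inl ?_⟩
    ext k j
    rw [simpleRoots_mul_permMatrix_row, hab]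
    fin_cases k <;> simp [h₀, h₁, h₂]
  · refine ⟨Equiv.ofBijective _ hinj.bijective_of_finite, Or.inr ?_⟩
    ext k j
    rw [Matrix.neg_apply, simpleRoots_mul_permMatrix_row, hab]
    fin_cases k <;> simp [root, h₀, h₁, h₂]

lemma exists_eq_permRep_or_eq_neg_permRep {V : Matrix (Fin 4) (Fin 4) ℤ}
    (hV : V * QA4 * Vᵀ = QA4) : ∃ σ : Perm (Fin 5), V = permRep σ ∨ V = -permRep σ := by
  have hW : (V * simpleRoots) *ᵥ 1 = 0 := by
    rw [← mulVec_mulVec, simpleRoots_mulVec_one, mulVec_zero]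
  have hgram : V * simpleRoots * (V * simpleRoots)ᵀ = QA4 := by
    rw [transpose_mul, Matrix.mul_assoc, ← Matrix.mul_assoc simpleRoots,
      ← QA4_eq_simpleRoots_mul_transpose, ← Matrix.mul_assoc, hV]
  have hV' : V = V * simpleRoots * partialSums := by
    rw [Matrix.mul_assoc, simpleRoots_mul_partialSums, Matrix.mul_one]
  obtain ⟨τ, hτ | hτ⟩ := exists_perm_of_gram hW hgram
  · exact ⟨τ⁻¹, Or.inl (by rw [hV', hτ, permRep_apply, inv_inv])⟩
  · exact ⟨τ⁻¹, Or.inr (by rw [hV', hτ, permRep_apply, inv_inv, Matrix.neg_mul])⟩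

lemma neg_permRep_not_trivial_on_discriminant (σ : Perm (Fin 5)) :
    ¬ ∀ x : Fin 4 → ℚ, IsIntVec (x ᵥ* QA4.map ((↑) : ℤ → ℚ)) →
      IsIntVec (x ᵥ* (-permRep σ).map ((↑) : ℤ → ℚ) - x) := by
  intro h
  -- `x = e₀ Q⁻¹` is in the dual lattice, but `2x` is not in the lattice.
  set x : Fin 4 → ℚ := ![4 / 5, 3 / 5, 2 / 5, 1 / 5]
  have hx : IsIntVec (x ᵥ* QA4.map ((↑) : ℤ → ℚ)) := fun i => by
    refine ⟨if i = 0 then 1 else 0, ?_⟩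
    fin_cases i <;> simp [x, vecMul, dotProduct, Fin.sum_univ_four, QA4] <;> norm_num
  obtain ⟨c, hc⟩ :=
    (h x hx).add (isIntVec_vecMul_sub_of_sub_one_eq_mul (permRep_sub_one σ) hx) 0
  have hc' : (5 * c : ℚ) = -8 := by
    rw [← hc, Matrix.map_neg _ fun a => Int.cast_neg a, vecMul_neg]
    simp only [Pi.add_apply, Pi.sub_apply, Pi.neg_apply]
    linarith [show x 0 = 4 / 5 from rfl]
  have : 5 * c = -8 := by exact_mod_cast hc'
  omega

def permRepUnits : Perm (Fin 5) →* (Matrix (Fin 4) (Fin 4) ℤ)ˣ :=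
  (Units.map permRep).comp (toUnits : Perm (Fin 5) ≃* _).toMonoidHom

lemma permRepUnits_mem_SOzero {σ : Perm (Fin 5)} (hσ : σ ∈ alternatingGroup (Fin 5)) :
    permRepUnits σ ∈ SOzero QA4 :=
  ⟨permRep_mul_QA4_mul_transpose σ,
    (det_permRep σ).trans (by simp [Perm.mem_alternatingGroup.1 hσ]),
    fun _ hx => isIntVec_vecMul_sub_of_sub_one_eq_mul (permRep_sub_one σ) hx⟩

def alternatingToSOzero : alternatingGroup (Fin 5) →* SOzero QA4 :=
  (permRepUnits.comp (alternatingGroup (Fin 5)).subtype).codRestrict _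
    fun σ => permRepUnits_mem_SOzero σ.2

lemma alternatingToSOzero_surjective : Function.Surjective alternatingToSOzero := by
  rintro ⟨U, hgram, hdet, hdisc⟩
  obtain ⟨σ, hσ | hσ⟩ := exists_eq_permRep_or_eq_neg_permRep hgram
  · have hsign : σ ∈ alternatingGroup (Fin 5) := by
      rw [Perm.mem_alternatingGroup, ← Units.val_inj, ← det_permRep, ← hσ, hdet, Units.val_one]
    exact ⟨⟨σ, hsign⟩, Subtype.ext (Units.ext hσ.symm)⟩
  · exact (neg_permRep_not_trivial_on_discriminant σ (hσ ▸ hdisc)).elim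

lemma alternatingToSOzero_injective : Function.Injective alternatingToSOzero := by
  rw [← MonoidHom.ker_eq_bot_iff]
  refine (MonoidHom.normal_ker _).eq_bot_or_eq_top.resolve_right fun htop => ?_
  let g : alternatingGroup (Fin 5) := ⟨c[0, 1, 2], Perm.mem_alternatingGroup.2 (by decide)⟩
  have hg : alternatingToSOzero g = 1 := MonoidHom.mem_ker.1 (htop ▸ Subgroup.mem_top g)
  have hrep : permRep c[0, 1, 2] = 1 :=
    congrArg (fun U : SOzero QA4 => ((U : (Matrix (Fin 4) (Fin 4) ℤ)ˣ) : Matrix (Fin 4) (Fin 4) ℤ))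
      hg
  exact absurd hrep (by decide)

end A4

theorem statement9 :
    Nonempty (↥(SOzero QA4) ≃* ↥(alternatingGroup (Fin 5))) ∧
    Nat.card ↥(SOzero QA4) = 60 := by
  let e := MulEquiv.ofBijective A4.alternatingToSOzero
    ⟨A4.alternatingToSOzero_injective, A4.alternatingToSOzero_surjective⟩
  refine ⟨⟨e.symm⟩, ?_⟩
  rw [← Nat.card_congr e.toEquiv, nat_card_alternatingGroup, Nat.card_eq_fintype_card,
    Fintype.card_fin]
  rfl
end

section
/- Let Λ_{A₁A₃} be the lattice ℤ⁴ with Gram matrix [[2,0,0,0],[0,2,−1,0],[0,−1,2,−1],[0,0,−1,2]] (the orthogonal sum of the A₁ and A₃ root lattices). Then the group SO₀(Λ_{A₁A₃}) of determinant-1 automorphisms of Λ_{A₁A₃} that induce the identity map on the discriminant group is isomorphic to the symmetric group Sym(4); in particular it has order 24. -/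
/-!
STATEMENT 10: The group SO₀(Λ_{A₁A₃}) of determinant-1 automorphisms of the
orthogonal sum of the A₁ and A₃ root lattices that induce the identity map on the
discriminant group is isomorphic to the symmetric group Sym(4); in particular it has
order 24.
-/

open Matrix

open Matrix

/-- The Gram matrix of the lattice A₁ ⊕ A₃. -/
def QA1A3 : Matrix (Fin 4) (Fin 4) ℤ := !![2,0,0,0; 0,2,-1,0; 0,-1,2,-1; 0,0,-1,2]

/-!
Since `U * Q * Uᵀ = Q`, the rows of `U` are roots (vectors of norm 2) of `A₁ ⊕ A₃` with Gram
matrix `Q`, so up to the sign on `A₁` they are the images of the simple roots of `A₃` under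
`O(A₃) = W(A₃) × {±1}`. The element `-1` of `O(A₃)` acts as `-1` on the `ℤ/4` summand of the
discriminant group, and the determinant forces the sign on `A₁` to be the sign of the Weyl group
element. Hence `SO₀` is the image of `Sym(4) ≅ W(A₃)` under `σ ↦ sign σ ⊕ σ`; both inclusions are
finite computations.
-/

section Discriminant

variable {n : ℕ}

lemma isIntVec_single_one (i : Fin n) : IsIntVec (Pi.single i (1 : ℚ)) := fun j => by
  by_cases h : j = i
  · exact ⟨1, by simp [h]⟩
  · exact ⟨0, by simp [h]⟩

lemma vecMul_map_sub_self (x : Fin n → ℚ) (U : Matrix (Fin n) (Fin n) ℤ) :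
    x ᵥ* U.map ((↑) : ℤ → ℚ) - x = x ᵥ* (U - 1).map ((↑) : ℤ → ℚ) := by
  rw [Matrix.map_sub _ (fun _ _ => Int.cast_sub _ _), mapq_one, Matrix.vecMul_sub,
    Matrix.vecMul_one]

lemma inv_smul_map_mul_map_eq_one {Q A : Matrix (Fin n) (Fin n) ℤ} {d : ℤ} (hd : d ≠ 0)
    (hAQ : A * Q = d • 1) :
    ((d : ℚ)⁻¹ • A.map ((↑) : ℤ → ℚ)) * Q.map ((↑) : ℤ → ℚ) = 1 := by
  have hdq : (d : ℚ) ≠ 0 := Int.cast_ne_zero.mpr hd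
  rw [Matrix.smul_mul, ← mapq_mul, hAQ]
  ext i j
  simp only [Matrix.smul_apply, Matrix.map_apply, Matrix.one_apply, smul_eq_mul]
  split_ifs <;> simp [hdq]

/-- The dual lattice is spanned by the rows of `Q⁻¹ = d⁻¹ • A`. -/
theorem forall_isIntVec_vecMul_sub_iff (Q A U : Matrix (Fin n) (Fin n) ℤ) {d : ℤ} (hd : d ≠ 0)
    (hAQ : A * Q = d • 1) :
    (∀ x : Fin n → ℚ, IsIntVec (x ᵥ* Q.map ((↑) : ℤ → ℚ)) →
        IsIntVec (x ᵥ* U.map ((↑) : ℤ → ℚ) - x)) ↔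
      ∀ i j, d ∣ (A * (U - 1)) i j := by
  have hdq : (d : ℚ) ≠ 0 := Int.cast_ne_zero.mpr hd
  have hinv := inv_smul_map_mul_map_eq_one hd hAQ
  constructor
  · intro h i j
    have hx := h (Pi.single i 1 ᵥ* ((d : ℚ)⁻¹ • A.map ((↑) : ℤ → ℚ))) (by
      rw [Matrix.vecMul_vecMul, hinv, Matrix.vecMul_one]
      exact isIntVec_single_one i)
    obtain ⟨c, hc⟩ := hx j
    rw [vecMul_map_sub_self, Matrix.vecMul_vecMul, Matrix.smul_mul, ← mapq_mul,
      Matrix.single_one_vecMul] at hc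
    simp only [Matrix.row_apply, Matrix.smul_apply, Matrix.map_apply, smul_eq_mul] at hc
    field_simp at hc
    exact ⟨c, by exact_mod_cast hc⟩
  · rintro h x hx
    choose E hE using h
    have hx' : x = (x ᵥ* Q.map ((↑) : ℤ → ℚ)) ᵥ* ((d : ℚ)⁻¹ • A.map ((↑) : ℤ → ℚ)) := by
      rw [Matrix.vecMul_vecMul, mul_eq_one_comm.mp hinv, Matrix.vecMul_one]
    have hE' : ((d : ℚ)⁻¹ • A.map ((↑) : ℤ → ℚ)) * (U - 1).map ((↑) : ℤ → ℚ) =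
        (Matrix.of E).map ((↑) : ℤ → ℚ) := by
      rw [Matrix.smul_mul, ← mapq_mul]
      ext i j
      simp [hE i j, hdq]
    rw [vecMul_map_sub_self, hx', Matrix.vecMul_vecMul _ _ ((U - 1).map _), hE']
    exact intvec_vecMul hx _

theorem mem_SOzero_iff {Q A : Matrix (Fin n) (Fin n) ℤ} {d : ℤ} (hd : d ≠ 0)
    (hAQ : A * Q = d • 1) (U : (Matrix (Fin n) (Fin n) ℤ)ˣ) :
    U ∈ SOzero Q ↔ (U : Matrix (Fin n) (Fin n) ℤ) * Q * (U : Matrix (Fin n) (Fin n) ℤ)ᵀ = Q ∧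
      (U : Matrix (Fin n) (Fin n) ℤ).det = 1 ∧
      ∀ i j, d ∣ (A * ((U : Matrix (Fin n) (Fin n) ℤ) - 1)) i j := by
  rw [← forall_isIntVec_vecMul_sub_iff Q A _ hd hAQ]
  rfl

end Discriminant

def adjQA1A3 : Matrix (Fin 4) (Fin 4) ℤ := !![4,0,0,0; 0,6,4,2; 0,4,8,4; 0,2,4,6]

lemma adjQA1A3_mul_QA1A3 : adjQA1A3 * QA1A3 = (8 : ℤ) • 1 := by decide

lemma mem_SOzero_QA1A3_iff (U : (Matrix (Fin 4) (Fin 4) ℤ)ˣ) :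
    U ∈ SOzero QA1A3 ↔
      (U : Matrix (Fin 4) (Fin 4) ℤ) * QA1A3 * (U : Matrix (Fin 4) (Fin 4) ℤ)ᵀ = QA1A3 ∧
      (U : Matrix (Fin 4) (Fin 4) ℤ).det = 1 ∧
      ∀ i j, (8 : ℤ) ∣ (adjQA1A3 * ((U : Matrix (Fin 4) (Fin 4) ℤ) - 1)) i j :=
  mem_SOzero_iff (by norm_num) adjQA1A3_mul_QA1A3 U

lemma dotProduct_QA1A3_mulVec_self (v : Fin 4 → ℤ) :
    v ⬝ᵥ QA1A3 *ᵥ v = 2 * v 0 ^ 2 + v 1 ^ 2 + (v 1 - v 2) ^ 2 + (v 2 - v 3) ^ 2 + v 3 ^ 2 := by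
  simp [QA1A3, dotProduct, mulVec, Fin.sum_univ_four]
  ring

def rootsA1A3 : List (Fin 4 → ℤ) :=
  [![1,0,0,0], ![-1,0,0,0],
    ![0,1,0,0], ![0,1,1,0], ![0,1,1,1], ![0,0,1,0], ![0,0,1,1], ![0,0,0,1],
    ![0,-1,0,0], ![0,-1,-1,0], ![0,-1,-1,-1], ![0,0,-1,0], ![0,0,-1,-1], ![0,0,0,-1]]

lemma mem_rootsA1A3_of_norm_eq_two {v : Fin 4 → ℤ} (hv : v ⬝ᵥ QA1A3 *ᵥ v = 2) :
    v ∈ rootsA1A3 := by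
  obtain ⟨a, b, c, d, rfl⟩ : ∃ a b c d : ℤ, v = ![a, b, c, d] :=
    ⟨v 0, v 1, v 2, v 3, by ext i; fin_cases i <;> rfl⟩
  rw [dotProduct_QA1A3_mulVec_self] at hv
  simp only [Matrix.cons_val] at hv
  have hsq : ∀ x : ℤ, x ^ 2 ≤ 2 → -1 ≤ x ∧ x ≤ 1 := fun x hx => ⟨by nlinarith, by nlinarith⟩
  have := sq_nonneg a; have := sq_nonneg b; have := sq_nonneg (b - c)
  have := sq_nonneg (c - d); have := sq_nonneg d
  obtain ⟨ha₁, ha₂⟩ := hsq a (by linarith)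
  obtain ⟨hb₁, hb₂⟩ := hsq b (by linarith)
  obtain ⟨hd₁, hd₂⟩ := hsq d (by linarith)
  obtain ⟨hc₁, hc₂⟩ : -2 ≤ c ∧ c ≤ 2 := by have := hsq (b - c) (by linarith); omega
  interval_cases a <;> interval_cases b <;> interval_cases c <;> interval_cases d <;>
    first | decide | norm_num at hv

/-- `σ` permutes the coordinates `ε₀, …, ε₃` of `A₃ = {x ∈ ℤ⁴ | ∑ xᵢ = 0}`, whose basis of
simple roots is `αⱼ = εⱼ₋₁ - εⱼ` (`j = 1, 2, 3`). Row `i ≠ 0` is `σ⁻¹ αᵢ` in that basis (the inverse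
because matrices act on row vectors), using that `ε_a - ε_b` has `αⱼ`-coordinate
`[j ≤ b] - [j ≤ a]`. -/
def a1a3OfPerm : Equiv.Perm (Fin 4) →* Matrix (Fin 4) (Fin 4) ℤ where
  toFun σ := Matrix.of fun i j =>
    if i = 0 then (if j = 0 then (Equiv.Perm.sign σ : ℤ) else 0)
    else (if j ≤ σ⁻¹ i then 1 else 0) - (if j ≤ σ⁻¹ (i - 1) then 1 else 0)
  map_one' := by decide +kernel
  map_mul' := by decide +kernel

lemma a1a3OfPerm_injective : Function.Injective a1a3OfPerm :=
  (injective_iff_map_eq_one a1a3OfPerm).2 (by decide +kernel)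

lemma a1a3OfPerm_mem_SOzero : ∀ σ : Equiv.Perm (Fin 4),
    a1a3OfPerm σ * QA1A3 * (a1a3OfPerm σ)ᵀ = QA1A3 ∧ (a1a3OfPerm σ).det = 1 ∧
      ∀ i j, (8 : ℤ) ∣ (adjQA1A3 * (a1a3OfPerm σ - 1)) i j := by
  decide +kernel

/-- The quantifiers are ordered so that the search prunes by the Gram entries first. -/
lemma exists_a1a3OfPerm_eq_of_rows : ∀ r₁ ∈ rootsA1A3, ∀ r₂ ∈ rootsA1A3,
    r₁ ⬝ᵥ QA1A3 *ᵥ r₂ = -1 → ∀ r₃ ∈ rootsA1A3, r₁ ⬝ᵥ QA1A3 *ᵥ r₃ = 0 →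
    r₂ ⬝ᵥ QA1A3 *ᵥ r₃ = -1 → ∀ r₀ ∈ rootsA1A3, r₀ ⬝ᵥ QA1A3 *ᵥ r₁ = 0 →
    r₀ ⬝ᵥ QA1A3 *ᵥ r₂ = 0 → r₀ ⬝ᵥ QA1A3 *ᵥ r₃ = 0 → (Matrix.of ![r₀, r₁, r₂, r₃]).det = 1 →
    (∀ i j, (8 : ℤ) ∣ (adjQA1A3 * (Matrix.of ![r₀, r₁, r₂, r₃] - 1)) i j) →
    ∃ σ, a1a3OfPerm σ = Matrix.of ![r₀, r₁, r₂, r₃] := by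
  decide +kernel

lemma exists_a1a3OfPerm_eq {U : Matrix (Fin 4) (Fin 4) ℤ} (hQ : U * QA1A3 * Uᵀ = QA1A3)
    (hdet : U.det = 1) (hdisc : ∀ i j, (8 : ℤ) ∣ (adjQA1A3 * (U - 1)) i j) :
    ∃ σ, a1a3OfPerm σ = U := by
  have hgram : ∀ i j, U i ⬝ᵥ QA1A3 *ᵥ U j = QA1A3 i j := fun i j => by
    simpa only [hQ, Matrix.transpose_transpose] using (Matrix.mul_mul_apply U QA1A3 Uᵀ i j).symm
  have hroot : ∀ i, U i ∈ rootsA1A3 := fun i =>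
    mem_rootsA1A3_of_norm_eq_two ((hgram i i).trans (by fin_cases i <;> rfl))
  have hU : U = Matrix.of ![U 0, U 1, U 2, U 3] := by
    ext i j; fin_cases i <;> rfl
  rw [hU] at hdet hdisc ⊢
  exact exists_a1a3OfPerm_eq_of_rows _ (hroot 1) _ (hroot 2) (hgram 1 2) _ (hroot 3)
    (hgram 1 3) (hgram 2 3) _ (hroot 0) (hgram 0 1) (hgram 0 2) (hgram 0 3) hdet hdisc

def permToSOzero : Equiv.Perm (Fin 4) →* SOzero QA1A3 :=
  a1a3OfPerm.toHomUnits.codRestrict (SOzero QA1A3) fun σ =>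
    (mem_SOzero_QA1A3_iff _).2 (a1a3OfPerm_mem_SOzero σ)

lemma permToSOzero_bijective : Function.Bijective permToSOzero := by
  refine ⟨fun σ τ h => a1a3OfPerm_injective ?_, fun ⟨U, hU⟩ => ?_⟩
  · exact congrArg (fun U : SOzero QA1A3 => ((U : (Matrix (Fin 4) (Fin 4) ℤ)ˣ) :
      Matrix (Fin 4) (Fin 4) ℤ)) h
  · obtain ⟨hQ, hdet, hdisc⟩ := (mem_SOzero_QA1A3_iff U).1 hU
    obtain ⟨σ, hσ⟩ := exists_a1a3OfPerm_eq hQ hdet hdisc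
    exact ⟨σ, Subtype.ext (Units.ext hσ)⟩

theorem statement10 :
    Nonempty (↥(SOzero QA1A3) ≃* Equiv.Perm (Fin 4)) ∧
    Nat.card ↥(SOzero QA1A3) = 24 := by
  let e : Equiv.Perm (Fin 4) ≃* SOzero QA1A3 :=
    MulEquiv.ofBijective permToSOzero permToSOzero_bijective
  refine ⟨⟨e.symm⟩, ?_⟩
  rw [← Nat.card_congr e.toEquiv, Nat.card_perm, Nat.card_fin]
  rfl
end

section
/- Let Λ_{A₁²A₂} be the lattice ℤ⁴ with Gram matrix [[2,0,0,0],[0,2,0,0],[0,0,2,−1],[0,0,−1,2]] (the orthogonal sum of two copies of A₁ and one copy of A₂). Then the group SO₀(Λ_{A₁²A₂}) of determinant-1 automorphisms of Λ_{A₁²A₂} that induce the identity map on the discriminant group is isomorphic to ℤ/2 × Sym(3); in particular it has order 12. -/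
/-!
The rows of an isometry `U` (acting on row vectors) are the images of the basis vectors, hence
roots, i.e. vectors of norm 2: `±e₀, ±e₁` (the roots of `A₁²`) and the six roots of `A₂`. A root
of `A₁²` pairs with every root to `0` or `±2`, so `⟨e₂, e₃⟩ = -1` puts rows 2 and 3 in `A₂`, and
being orthogonal to them puts rows 0 and 1 in `A₁²`. Among these finitely many matrices, acting
trivially on `Λ*/Λ ≅ (ℤ/2)² × ℤ/3` forces the `A₁²`-block to be diagonal and the `A₂`-block to
lie in the Weyl group `S₃`, and `det U = 1` ties the second diagonal sign to the first one and to
the sign of the permutation. What remains is the image of the injective homomorphism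
`(ε, σ) ↦ diag(ε, ε sgn σ) ⊕ w(σ⁻¹)` from `ℤ/2 × S₃`, where `w` is the Weyl group action.
-/

open Matrix

open Matrix

/-- The Gram matrix of the lattice A₁ ⊕ A₁ ⊕ A₂. -/
def QA1A1A2 : Matrix (Fin 4) (Fin 4) ℤ := !![2,0,0,0; 0,2,0,0; 0,0,2,-1; 0,0,-1,2]

section Discriminant

variable {n : ℕ} {Q U : Matrix (Fin n) (Fin n) ℤ}

theorem vecMul_map_sub_one (x : Fin n → ℚ) (M : Matrix (Fin n) (Fin n) ℤ) :
    x ᵥ* M.map ((↑) : ℤ → ℚ) - x = x ᵥ* (M - 1).map ((↑) : ℤ → ℚ) := by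
  rw [Matrix.map_sub _ (fun a b => Int.cast_sub a b), mapq_one, vecMul_sub, vecMul_one]

theorem isIntVec_vecMul_sub_of_mul_eq {Z : Matrix (Fin n) (Fin n) ℤ} (hZ : Q * Z = U - 1)
    {x : Fin n → ℚ} (hx : IsIntVec (x ᵥ* Q.map ((↑) : ℤ → ℚ))) :
    IsIntVec (x ᵥ* U.map ((↑) : ℤ → ℚ) - x) := by
  rw [vecMul_map_sub_one, ← hZ, mapq_mul, ← vecMul_vecMul]
  exact intvec_vecMul hx Z

theorem dvd_mul_sub_one_apply_of_isIntVec {A : Matrix (Fin n) (Fin n) ℤ} {m : ℤ} (hm : m ≠ 0)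
    (hAQ : A * Q = m • 1)
    (hU : ∀ x : Fin n → ℚ, IsIntVec (x ᵥ* Q.map ((↑) : ℤ → ℚ)) →
      IsIntVec (x ᵥ* U.map ((↑) : ℤ → ℚ) - x)) (i j : Fin n) :
    m ∣ (A * (U - 1)) i j := by
  -- test `U` against the dual vector `(row i of A) / m`
  set x : Fin n → ℚ := (m : ℚ)⁻¹ • A.map ((↑) : ℤ → ℚ) i
  have hrow (M : Matrix (Fin n) (Fin n) ℤ) (k : Fin n) :
      (x ᵥ* M.map ((↑) : ℤ → ℚ)) k = ((A * M) i k : ℚ) / m := by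
    rw [smul_vecMul, ← mul_apply_eq_vecMul, ← mapq_mul]
    simp [div_eq_inv_mul]
  obtain ⟨c, hc⟩ := hU x (fun k => ⟨if i = k then 1 else 0, by
    rw [hrow, hAQ]; by_cases h : i = k <;> simp [h, hm]⟩) j
  rw [vecMul_map_sub_one, hrow, div_eq_iff (by exact_mod_cast hm)] at hc
  exact ⟨c, by rw [mul_comm]; exact_mod_cast hc⟩

theorem mul_eq_sub_one_of_dvd {A : Matrix (Fin n) (Fin n) ℤ} {m : ℤ} (hm : m ≠ 0)
    (hQA : Q * A = m • 1) (hdvd : ∀ i j, m ∣ (A * (U - 1)) i j) :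
    Q * (A * (U - 1)).map (· / m) = U - 1 := by
  have hZ : m • (A * (U - 1)).map (· / m) = A * (U - 1) := by
    ext i j; exact Int.mul_ediv_cancel' (hdvd i j)
  apply smul_right_injective _ hm
  dsimp only
  rw [← Matrix.mul_smul, hZ, ← Matrix.mul_assoc, hQA, Matrix.smul_mul, Matrix.one_mul]

-- Typically `A = adj Q` and `m = det Q`.
theorem forall_isIntVec_iff_dvd {A : Matrix (Fin n) (Fin n) ℤ} {m : ℤ} (hm : m ≠ 0)
    (hAQ : A * Q = m • 1) (hQA : Q * A = m • 1) :
    (∀ x : Fin n → ℚ, IsIntVec (x ᵥ* Q.map ((↑) : ℤ → ℚ)) →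
      IsIntVec (x ᵥ* U.map ((↑) : ℤ → ℚ) - x)) ↔ ∀ i j, m ∣ (A * (U - 1)) i j :=
  ⟨dvd_mul_sub_one_apply_of_isIntVec hm hAQ,
    fun h _ => isIntVec_vecMul_sub_of_mul_eq (mul_eq_sub_one_of_dvd hm hQA h)⟩

end Discriminant

section Determinant

variable {R : Type*} [CommRing R]

-- Laplace expansion along the first row, in a form that `decide` can evaluate.
def detFinFour (A : Matrix (Fin 4) (Fin 4) R) : R :=
  A 0 0 * (A 1 1 * (A 2 2 * A 3 3 - A 2 3 * A 3 2) - A 1 2 * (A 2 1 * A 3 3 - A 2 3 * A 3 1)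
      + A 1 3 * (A 2 1 * A 3 2 - A 2 2 * A 3 1))
    - A 0 1 * (A 1 0 * (A 2 2 * A 3 3 - A 2 3 * A 3 2) - A 1 2 * (A 2 0 * A 3 3 - A 2 3 * A 3 0)
      + A 1 3 * (A 2 0 * A 3 2 - A 2 2 * A 3 0))
    + A 0 2 * (A 1 0 * (A 2 1 * A 3 3 - A 2 3 * A 3 1) - A 1 1 * (A 2 0 * A 3 3 - A 2 3 * A 3 0)
      + A 1 3 * (A 2 0 * A 3 1 - A 2 1 * A 3 0))
    - A 0 3 * (A 1 0 * (A 2 1 * A 3 2 - A 2 2 * A 3 1) - A 1 1 * (A 2 0 * A 3 2 - A 2 2 * A 3 0)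
      + A 1 2 * (A 2 0 * A 3 1 - A 2 1 * A 3 0))

theorem det_eq_detFinFour (A : Matrix (Fin 4) (Fin 4) R) : A.det = detFinFour A := by
  simp [det_succ_row_zero, Fin.sum_univ_succ, detFinFour, Fin.succAbove]
  ring

end Determinant

namespace LatticeA1A1A2

def bilin (x y : Fin 4 → ℤ) : ℤ :=
  2 * x 0 * y 0 + 2 * x 1 * y 1 + 2 * x 2 * y 2 - x 2 * y 3 - x 3 * y 2 + 2 * x 3 * y 3

theorem mul_gram_mul_transpose_apply (U : Matrix (Fin 4) (Fin 4) ℤ) (i j : Fin 4) :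
    (U * QA1A1A2 * Uᵀ) i j = bilin (U i) (U j) := by
  simp only [QA1A1A2, bilin, Matrix.mul_apply, Fin.sum_univ_four, transpose_apply, of_apply,
    cons_val', cons_val_fin_one, cons_val_zero, cons_val_one, cons_val]
  ring

def rootA1 : Fin 4 → Fin 4 → ℤ := ![![1, 0, 0, 0], ![-1, 0, 0, 0], ![0, 1, 0, 0], ![0, -1, 0, 0]]

def rootA2 : Fin 6 → Fin 4 → ℤ :=
  ![![0, 0, 1, 0], ![0, 0, -1, 0], ![0, 0, 0, 1], ![0, 0, 0, -1], ![0, 0, 1, 1], ![0, 0, -1, -1]]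

theorem root_cases {v : Fin 4 → ℤ} (hv : bilin v v = 2) :
    (∃ k, v = rootA1 k) ∨ ∃ k, v = rootA2 k := by
  have hv' : v = ![v 0, v 1, v 2, v 3] := by funext i; fin_cases i <;> rfl
  generalize v 0 = a, v 1 = b, v 2 = c, v 3 = d at hv hv'
  subst hv'
  simp only [bilin, Matrix.cons_val] at hv
  have bound (t : ℤ) (ht : t ^ 2 ≤ 1) : -1 ≤ t ∧ t ≤ 1 :=
    abs_le.mp ((sq_le_one_iff_abs_le_one t).mp ht)
  obtain ⟨ha, ha'⟩ :=
    bound a (by nlinarith [sq_nonneg b, sq_nonneg c, sq_nonneg d, sq_nonneg (c - d)])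
  obtain ⟨hb, hb'⟩ :=
    bound b (by nlinarith [sq_nonneg a, sq_nonneg c, sq_nonneg d, sq_nonneg (c - d)])
  obtain ⟨hc, hc'⟩ :=
    bound c (by nlinarith [sq_nonneg a, sq_nonneg b, sq_nonneg d, sq_nonneg (c - d)])
  obtain ⟨hd, hd'⟩ :=
    bound d (by nlinarith [sq_nonneg a, sq_nonneg b, sq_nonneg c, sq_nonneg (c - d)])
  interval_cases a <;> interval_cases b <;> interval_cases c <;> interval_cases d <;>
    first | omega | decide

theorem bilin_comm (x y : Fin 4 → ℤ) : bilin x y = bilin y x := by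
  simp only [bilin]; ring

theorem exists_rootA2_of_bilin_eq_neg_one {v w : Fin 4 → ℤ} (hv : bilin v v = 2)
    (hw : bilin w w = 2) (h : bilin v w = -1) : (∃ k, v = rootA2 k) ∧ ∃ l, w = rootA2 l := by
  have hA1 (k : Fin 4) {u : Fin 4 → ℤ} (hu : bilin u u = 2) : bilin (rootA1 k) u ≠ -1 := by
    rcases root_cases hu with ⟨l, rfl⟩ | ⟨l, rfl⟩ <;> revert k l <;> decide
  refine ⟨(root_cases hv).resolve_left ?_, (root_cases hw).resolve_left ?_⟩
  · rintro ⟨k, rfl⟩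
    exact hA1 k hw h
  · rintro ⟨l, rfl⟩
    exact hA1 l hv (bilin_comm v _ ▸ h)

theorem exists_rootA1_of_bilin_eq_zero {u : Fin 4 → ℤ} {k l : Fin 6} (hu : bilin u u = 2)
    (hkl : bilin (rootA2 k) (rootA2 l) = -1) (hk : bilin u (rootA2 k) = 0)
    (hl : bilin u (rootA2 l) = 0) : ∃ m, u = rootA1 m := by
  refine (root_cases hu).resolve_right ?_
  rintro ⟨m, rfl⟩
  revert k l m
  decide

-- Realise `A₂` as `{x ∈ ℤ³ | x₀ + x₁ + x₂ = 0}` with `e₂ = ε₀ - ε₁`, `e₃ = ε₁ - ε₂`; the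
-- coordinate map of `A₂` extends to `ℤ³` by `εₖ ↦ coordA2 k`, so row `i` of `weylA2 σ` holds
-- the coordinates of `ε_{σ i} - ε_{σ (i + 1)}`, and `S₃` acts by permuting the `εₖ`.
def coordA2 : Fin 3 → Fin 2 → ℤ := ![![1, 1], ![0, 1], ![0, 0]]

def weylA2 (σ : Equiv.Perm (Fin 3)) : Matrix (Fin 2) (Fin 2) ℤ :=
  Matrix.of fun i j => coordA2 (σ i.castSucc) j - coordA2 (σ i.succ) j

-- `p.2⁻¹` because matrices act on row vectors; the factor `sign p.2 = det (weylA2 p.2⁻¹)` makes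
-- the determinant `1`.
def toMatrix (p : Multiplicative (ZMod 2) × Equiv.Perm (Fin 3)) : Matrix (Fin 4) (Fin 4) ℤ :=
  let ε : ℤ := if p.1 = 1 then 1 else -1
  let W := weylA2 p.2⁻¹
  !![ε, 0, 0, 0; 0, ε * Equiv.Perm.sign p.2, 0, 0; 0, 0, W 0 0, W 0 1; 0, 0, W 1 0, W 1 1]

def toMatrixHom : Multiplicative (ZMod 2) × Equiv.Perm (Fin 3) →* Matrix (Fin 4) (Fin 4) ℤ where
  toFun := toMatrix
  map_one' := by decide
  map_mul' := by decide

-- The adjugate of the Gram matrix, whose determinant is `12`.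
def adjGram : Matrix (Fin 4) (Fin 4) ℤ := !![6, 0, 0, 0; 0, 6, 0, 0; 0, 0, 8, 4; 0, 0, 4, 8]

theorem adjGram_mul_gram : adjGram * QA1A1A2 = (12 : ℤ) • 1 := by decide

theorem gram_mul_adjGram : QA1A1A2 * adjGram = (12 : ℤ) • 1 := by decide

-- Membership in `SOzero QA1A1A2` in a form that `decide` can evaluate.
abbrev MemSOzero (M : Matrix (Fin 4) (Fin 4) ℤ) : Prop :=
  M * QA1A1A2 * Mᵀ = QA1A1A2 ∧ detFinFour M = 1 ∧ ∀ i j, 12 ∣ (adjGram * (M - 1)) i j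

theorem mem_SOzero_iff (U : (Matrix (Fin 4) (Fin 4) ℤ)ˣ) :
    U ∈ SOzero QA1A1A2 ↔ MemSOzero U := by
  rw [MemSOzero, ← det_eq_detFinFour,
    ← forall_isIntVec_iff_dvd (by norm_num) adjGram_mul_gram gram_mul_adjGram]
  rfl

theorem memSOzero_toMatrix : ∀ p, MemSOzero (toMatrix p) := by decide

theorem exists_toMatrix_eq_of_rootA1_rootA2 : ∀ (a b : Fin 4) (c d : Fin 6),
    detFinFour (Matrix.of ![rootA1 a, rootA1 b, rootA2 c, rootA2 d]) = 1 →
    (∀ i j, 12 ∣ (adjGram * (Matrix.of ![rootA1 a, rootA1 b, rootA2 c, rootA2 d] - 1)) i j) →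
    ∃ p, toMatrix p = Matrix.of ![rootA1 a, rootA1 b, rootA2 c, rootA2 d] := by
  decide

theorem toMatrix_injective : Function.Injective toMatrix := by
  unfold Function.Injective
  decide

theorem exists_toMatrix_eq {U : Matrix (Fin 4) (Fin 4) ℤ} (hU : MemSOzero U) :
    ∃ p, toMatrix p = U := by
  obtain ⟨hgram, hdet, hdisc⟩ := hU
  have hB (i j : Fin 4) : bilin (U i) (U j) = QA1A1A2 i j := by
    rw [← mul_gram_mul_transpose_apply, hgram]
  obtain ⟨⟨c, hc⟩, d, hd⟩ := exists_rootA2_of_bilin_eq_neg_one (hB 2 2) (hB 3 3) (hB 2 3)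
  have hcd : bilin (rootA2 c) (rootA2 d) = -1 := hc ▸ hd ▸ hB 2 3
  obtain ⟨a, ha⟩ := exists_rootA1_of_bilin_eq_zero (hB 0 0) hcd (hc ▸ hB 0 2) (hd ▸ hB 0 3)
  obtain ⟨b, hb⟩ := exists_rootA1_of_bilin_eq_zero (hB 1 1) hcd (hc ▸ hB 1 2) (hd ▸ hB 1 3)
  have hU : U = Matrix.of ![rootA1 a, rootA1 b, rootA2 c, rootA2 d] := by
    funext i
    fin_cases i <;> assumption
  subst hU
  exact exists_toMatrix_eq_of_rootA1_rootA2 a b c d hdet hdisc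

def toSOzero : Multiplicative (ZMod 2) × Equiv.Perm (Fin 3) →* SOzero QA1A1A2 :=
  toMatrixHom.toHomUnits.codRestrict _ fun p => (mem_SOzero_iff _).mpr (memSOzero_toMatrix p)

theorem toSOzero_bijective : Function.Bijective toSOzero := by
  refine ⟨fun p q h => toMatrix_injective ?_, fun U => ?_⟩
  · exact congrArg (fun U : SOzero QA1A1A2 => ((U : (Matrix (Fin 4) (Fin 4) ℤ)ˣ) :
      Matrix (Fin 4) (Fin 4) ℤ)) h
  · obtain ⟨p, hp⟩ := exists_toMatrix_eq ((mem_SOzero_iff U).mp U.2)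
    exact ⟨p, Subtype.ext (Units.ext hp)⟩

end LatticeA1A1A2

theorem statement12 :
    Nonempty (↥(SOzero QA1A1A2) ≃* (Multiplicative (ZMod 2) × Equiv.Perm (Fin 3))) ∧
    Nat.card ↥(SOzero QA1A1A2) = 12 := by
  let e := MulEquiv.ofBijective LatticeA1A1A2.toSOzero LatticeA1A1A2.toSOzero_bijective
  refine ⟨⟨e.symm⟩, ?_⟩
  rw [← Nat.card_congr e.toEquiv]
  simp [Fintype.card_perm, Nat.factorial]
end
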